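/- arXiv:1802.02485 — 7 statements merged into one kernel-verified Lean document; each statement's English description precedes it below -/
import Mathlib

section
/- The set K_exp = {(r,p,q) ∈ ℝ³ : q > 0 and q·e^{r/q} ≤ p} ∪ {(r,p,0) : r ≤ 0 and p ≥ 0} is a closed convex cone in ℝ³. -/
/-- The exponential cone in ℝ³ (represented as ℝ × ℝ × ℝ). -/
def Kexp : Set (ℝ × ℝ × ℝ) :=
  {t | 0 < t.2.2 ∧ t.2.2 * Real.exp (t.1 / t.2.2) ≤ t.2.1} ∪
  {t | t.2.2 = 0 ∧ t.1 ≤ 0 ∧ 0 ≤ t.2.1}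

/-- Fenchel–Young type inequality for exp. -/
lemma young_exp (x y : ℝ) (hy : 0 < y) : x * y - y * Real.log y + y ≤ Real.exp x := by
  have h1 := Real.add_one_le_exp (x - Real.log y)
  have h2 : Real.exp (x - Real.log y) = Real.exp x / y := by
    rw [Real.exp_sub, Real.exp_log hy]
  rw [h2] at h1
  have h3 : (x - Real.log y + 1) * y ≤ Real.exp x / y * y :=
    mul_le_mul_of_nonneg_right h1 hy.le
  rw [div_mul_cancel₀ _ (ne_of_gt hy)] at h3
  nlinarith

/-- Kexp as an intersection of closed half-spaces. -/
lemma Kexp_eq :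
    Kexp = ⋂ (y : ℝ) (_ : 0 < y),
      {t : ℝ × ℝ × ℝ | t.1 * y - t.2.2 * (y * Real.log y - y) ≤ t.2.1} := by
  ext ⟨r, p, q⟩
  simp only [Kexp, Set.mem_union, Set.mem_setOf_eq, Set.mem_iInter]
  constructor
  · rintro (⟨hq, hle⟩ | ⟨hq, hr, hp⟩) y hy
    · have h := young_exp (r / q) y hy
      have h2 : (r / q * y - y * Real.log y + y) * q ≤ Real.exp (r / q) * q :=
        mul_le_mul_of_nonneg_right h hq.le
      have h3 : r / q * y * q = r * y := by
        field_simp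
      nlinarith
    · simp only [hq, zero_mul, sub_zero]
      nlinarith [mul_nonpos_of_nonpos_of_nonneg hr hy.le]
  · intro h
    rcases lt_trichotomy q 0 with hq | hq | hq
    · exfalso
      -- choose y = exp M with M large
      set M : ℝ := max 0 ((|p| + 1 - r - q) / (-q)) with hM
      have hM0 : 0 ≤ M := le_max_left _ _
      have hMq : -q * M ≥ |p| + 1 - r - q := by
        have h1 : (|p| + 1 - r - q) / (-q) ≤ M := le_max_right _ _
        have h2 : 0 < -q := by linarith
        have h3 := mul_le_mul_of_nonneg_right h1 h2.le
        rw [div_mul_cancel₀ _ (ne_of_gt h2)] at h3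
        linarith
      have hy : (0:ℝ) < Real.exp M := Real.exp_pos M
      have := h (Real.exp M) hy
      rw [Real.log_exp] at this
      -- this : r * exp M - q * (exp M * M - exp M) ≤ p
      have hfac : r * Real.exp M - q * (Real.exp M * M - Real.exp M)
          = Real.exp M * (r - q * M + q) := by ring
      rw [hfac] at this
      have h1 : |p| + 1 ≤ r - q * M + q := by
        have : -q * M ≥ |p| + 1 - r - q := hMq
        linarith
      have he1 : (1:ℝ) ≤ Real.exp M := Real.one_le_exp hM0
      have hp1 : (0:ℝ) < |p| + 1 := by positivity
      have : |p| + 1 ≤ Real.exp M * (r - q * M + q) := by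
        calc |p| + 1 = 1 * (|p| + 1) := (one_mul _).symm
          _ ≤ Real.exp M * (r - q * M + q) :=
            mul_le_mul he1 h1 hp1.le (by positivity)
      have hpabs : p ≤ |p| := le_abs_self p
      linarith
    · -- q = 0 case: show r ≤ 0 and 0 ≤ p
      right
      have hp0 : (0:ℝ) ≤ p := by
        by_contra hp
        push_neg at hp
        have hy : 0 < -p / (|r| + 1) := div_pos (by linarith) (by positivity)
        have h2 := h (-p / (|r| + 1)) hy
        rw [hq] at h2
        simp only [zero_mul, sub_zero] at h2
        have h4 : -(|r|) * (-p / (|r| + 1)) ≤ r * (-p / (|r| + 1)) :=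
          mul_le_mul_of_nonneg_right (neg_abs_le r) hy.le
        have e : (|r| + 1) * (-p / (|r| + 1)) = -p := by field_simp
        nlinarith [abs_nonneg r]
      refine ⟨hq, ?_, hp0⟩
      by_contra hr
      push_neg at hr
      have hy : 0 < (p + 1) / r := div_pos (by linarith) hr
      have h2 := h ((p + 1) / r) hy
      rw [hq] at h2
      simp only [zero_mul, sub_zero] at h2
      rw [mul_div_cancel₀ _ (ne_of_gt hr)] at h2
      linarith
    · -- q > 0 case
      left
      refine ⟨hq, ?_⟩
      have hy : 0 < Real.exp (r / q) := Real.exp_pos _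
      have h2 := h (Real.exp (r / q)) hy
      rw [Real.log_exp] at h2
      have h3 : r * Real.exp (r / q) -
          q * (Real.exp (r / q) * (r / q) - Real.exp (r / q)) = q * Real.exp (r / q) := by
        field_simp
        ring
      rw [h3] at h2
      exact h2

/-- The exponential cone is a closed convex cone in ℝ³. -/
theorem Kexp_isClosedConvexCone :
    IsClosed Kexp ∧ Convex ℝ Kexp ∧
      ∀ c : ℝ, 0 ≤ c → ∀ x ∈ Kexp, c • x ∈ Kexp := by
  rw [Kexp_eq]
  refine ⟨?_, ?_, ?_⟩
  · refine isClosed_iInter fun y => isClosed_iInter fun hy => ?_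
    exact isClosed_le (by fun_prop) (by fun_prop)
  · refine convex_iInter fun y => convex_iInter fun hy => ?_
    intro x hx z hz a b ha hb hab
    simp only [Set.mem_setOf_eq, Prod.fst_add, Prod.snd_add, Prod.smul_fst, Prod.smul_snd,
      smul_eq_mul] at *
    nlinarith
  · intro c hc x hx
    simp only [Set.mem_iInter, Set.mem_setOf_eq] at *
    intro y hy
    have := hx y hy
    simp only [Prod.smul_fst, Prod.smul_snd, smul_eq_mul]
    nlinarith
end

section
/- The set {(r,p,q) ∈ ℝ³ : q > 0 and q·e^{r/q} ≤ p} ∪ {(r,p,0) : r ≤ 0 and p ≥ 0} equals the topological closure of {(r,p,q) ∈ ℝ³ : q > 0 and q·e^{r/q} ≤ p}. -/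
open Filter Topology Real

lemma exp_lower (c q : ℝ) (hc : 0 < c) (hq : 0 < q) :
    c ^ 2 / (4 * q) ≤ q * Real.exp (c / q) := by
  have h1 : c / (2 * q) + 1 ≤ Real.exp (c / (2 * q)) := Real.add_one_le_exp _
  have h2 : Real.exp (c / q) = Real.exp (c / (2 * q)) * Real.exp (c / (2 * q)) := by
    rw [← Real.exp_add]
    congr 1
    field_simp
    ring
  have h3 : (0:ℝ) < c / (2 * q) := by positivity
  rw [h2, div_le_iff₀ (by positivity)]
  have hE : c / (2 * q) ≤ Real.exp (c / (2 * q)) := by linarith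
  have h4 : (c / (2 * q)) ^ 2 ≤ (Real.exp (c / (2 * q))) ^ 2 := pow_le_pow_left₀ h3.le hE 2
  have h5 : 4 * q ^ 2 * (c / (2 * q)) ^ 2 = c ^ 2 := by field_simp; ring
  nlinarith

/-- The exponential cone is the closure of its `q > 0` part. -/
theorem Kexp_eq_closure :
    Kexp = closure {t : ℝ × ℝ × ℝ | 0 < t.2.2 ∧ t.2.2 * Real.exp (t.1 / t.2.2) ≤ t.2.1} := by
  set S : Set (ℝ × ℝ × ℝ) := {t : ℝ × ℝ × ℝ | 0 < t.2.2 ∧ t.2.2 * Real.exp (t.1 / t.2.2) ≤ t.2.1}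
    with hS
  apply Set.Subset.antisymm
  · rintro ⟨r, p, q⟩ (h | ⟨hq, hr, hp⟩)
    · exact subset_closure h
    · -- approximate by (r, p + 1/(n+1), 1/(n+1))
      simp only at hq hr hp
      subst hq
      have hlim : Tendsto (fun n : ℕ => ((r, p + 1/(n+1), 1/(n+1)) : ℝ × ℝ × ℝ))
          atTop (𝓝 (r, p, 0)) := by
        have h0 : Tendsto (fun n : ℕ => (1:ℝ)/(n+1)) atTop (𝓝 0) :=
          tendsto_one_div_add_atTop_nhds_zero_nat
        have hp' : Tendsto (fun n : ℕ => p + (1:ℝ)/(n+1)) atTop (𝓝 p) := by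
          simpa using (tendsto_const_nhds (x := p)).add h0
        exact (tendsto_const_nhds (x := r)).prodMk_nhds (hp'.prodMk_nhds h0)
      refine mem_closure_of_tendsto hlim (Eventually.of_forall fun n => ?_)
      have hn : (0:ℝ) < 1/(n+1) := by positivity
      constructor
      · exact hn
      · simp only
        have he : Real.exp (r / (1/(n+1))) ≤ 1 := by
          rw [Real.exp_le_one_iff]
          have : (0:ℝ) ≤ 1/(n+1) := hn.le
          exact div_nonpos_iff.2 (Or.inr ⟨hr, this⟩)
        nlinarith
  · rintro t ht
    obtain ⟨u, hu, hlim⟩ := mem_closure_iff_seq_limit.mp ht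
    obtain ⟨r, p, q⟩ := t
    have hr : Tendsto (fun n => (u n).1) atTop (𝓝 r) :=
      (continuous_fst.tendsto _).comp hlim
    have hp : Tendsto (fun n => (u n).2.1) atTop (𝓝 p) :=
      ((continuous_fst.comp continuous_snd).tendsto _).comp hlim
    have hq : Tendsto (fun n => (u n).2.2) atTop (𝓝 q) :=
      ((continuous_snd.comp continuous_snd).tendsto _).comp hlim
    have hq0 : 0 ≤ q := ge_of_tendsto' hq fun n => (hu n).1.le
    rcases hq0.lt_or_eq with hqpos | hqz
    · left
      refine ⟨hqpos, ?_⟩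
      have hf : Tendsto (fun n => (u n).2.2 * Real.exp ((u n).1 / (u n).2.2)) atTop
          (𝓝 (q * Real.exp (r / q))) :=
        hq.mul ((Real.continuous_exp.tendsto _).comp (hr.div hq hqpos.ne'))
      exact le_of_tendsto_of_tendsto' hf hp fun n => (hu n).2
    · right
      subst hqz
      have hpp : 0 ≤ p := ge_of_tendsto' hp fun n =>
        le_trans (le_of_lt (by have := (hu n).1; positivity)) (hu n).2
      refine ⟨rfl, ?_, hpp⟩
      show r ≤ 0
      by_contra hr0
      push_neg at hr0
      set c := r / 2 with hc
      have hcpos : 0 < c := by positivity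
      have e1 : ∀ᶠ n in atTop, c < (u n).1 := hr.eventually (eventually_gt_nhds (by linarith))
      have e2 : ∀ᶠ n in atTop, (u n).2.1 < p + 1 :=
        hp.eventually (eventually_lt_nhds (lt_add_one p))
      have hδ : 0 < c ^ 2 / (4 * (p + 1)) := by positivity
      have e3 : ∀ᶠ n in atTop, (u n).2.2 < c ^ 2 / (4 * (p + 1)) :=
        hq.eventually (eventually_lt_nhds hδ)
      obtain ⟨n, h1, h2, h3⟩ := (e1.and (e2.and e3)).exists
      have hqn : 0 < (u n).2.2 := (hu n).1
      have key : c ^ 2 / (4 * (u n).2.2) ≤ (u n).2.2 * Real.exp (c / (u n).2.2) :=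
        exp_lower c _ hcpos hqn
      have mono : (u n).2.2 * Real.exp (c / (u n).2.2) ≤
          (u n).2.2 * Real.exp ((u n).1 / (u n).2.2) := by
        apply mul_le_mul_of_nonneg_left _ hqn.le
        exact Real.exp_le_exp.2 ((div_le_div_iff_of_pos_right hqn).2 h1.le)
      have big : p + 1 < c ^ 2 / (4 * (u n).2.2) := by
        rw [lt_div_iff₀ (by positivity)]
        rw [lt_div_iff₀ (by positivity)] at h3
        nlinarith
      nlinarith [(hu n).2]
end

section
/- The dual cone of the exponential cone K_exp equals the set {(u,v,w) ∈ ℝ³ : u < 0 and -u·e^{w/u} ≤ e·v} ∪ {(0,v,w) : v ≥ 0 and w ≥ 0}. -/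
/-- The claimed description of the dual exponential cone. -/
def KexpStar : Set (ℝ × ℝ × ℝ) :=
  {u | u.1 < 0 ∧ -u.1 * Real.exp (u.2.2 / u.1) ≤ Real.exp 1 * u.2.1} ∪
  {u | u.1 = 0 ∧ 0 ≤ u.2.1 ∧ 0 ≤ u.2.2}


/-- Key scalar inequality: if `a < 0` and `-a * exp(c/a) ≤ e * b`, then
`a*s + b*exp s + c ≥ 0` for all `s`. -/
lemma key_ineq (a b c : ℝ) (ha : a < 0)
    (hK : -a * Real.exp (c / a) ≤ Real.exp 1 * b) (s : ℝ) :
    0 ≤ a * s + b * Real.exp s + c := by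
  have hna : 0 < -a := by linarith
  have h1 : -a * Real.exp (c / a - 1) ≤ b := by
    have hsplit : Real.exp (c / a) = Real.exp (c / a - 1) * Real.exp 1 := by
      rw [← Real.exp_add]; ring_nf
    rw [hsplit] at hK
    nlinarith [Real.exp_pos 1]
  have h2 : s + c / a - 1 + 1 ≤ Real.exp (s + c / a - 1) := Real.add_one_le_exp _
  have h3 : Real.exp (c / a - 1) * Real.exp s = Real.exp (s + c / a - 1) := by
    rw [← Real.exp_add]; ring_nf
  have h4 : -a * Real.exp (s + c / a - 1) ≤ b * Real.exp s := by
    have := mul_le_mul_of_nonneg_right h1 (Real.exp_pos s).le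
    calc -a * Real.exp (s + c / a - 1) = -a * Real.exp (c / a - 1) * Real.exp s := by
          rw [mul_assoc, h3]
      _ ≤ b * Real.exp s := this
  have h5 : -a * (s + c / a) ≤ -a * Real.exp (s + c / a - 1) := by nlinarith
  have hca : a * (c / a) = c := by rw [mul_comm, div_mul_cancel₀ _ ha.ne]
  nlinarith [h4, h5]

/-- The dual cone of the exponential cone equals `KexpStar`. -/
theorem dualCone_Kexp :
    {u : ℝ × ℝ × ℝ | ∀ v ∈ Kexp, 0 ≤ u.1 * v.1 + u.2.1 * v.2.1 + u.2.2 * v.2.2}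
      = KexpStar := by
  ext ⟨a, b, c⟩
  simp only [Set.mem_setOf_eq, Kexp, KexpStar, Set.mem_union]
  constructor
  · intro h
    -- basic consequences
    have hb : 0 ≤ b := by
      have := h (0, 1, 0) (Or.inr ⟨rfl, le_refl 0, zero_le_one⟩)
      simpa using this
    have key : ∀ r : ℝ, 0 ≤ a * r + b * Real.exp r + c := by
      intro r
      have := h (r, Real.exp r, 1) (Or.inl ⟨one_pos, by simp⟩)
      simpa using this
    have ha : a ≤ 0 := by
      by_contra hpos
      push_neg at hpos
      set t := (|b| + |c| + 1) / a with ht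
      have htpos : 0 < t := by positivity
      have h1 := key (-t)
      have hat : a * t = |b| + |c| + 1 := by rw [ht]; field_simp
      have he1 : Real.exp (-t) ≤ 1 := Real.exp_le_one_iff.2 (by linarith)
      have he0 : 0 < Real.exp (-t) := Real.exp_pos _
      have hbb : b * Real.exp (-t) ≤ |b| := by
        calc b * Real.exp (-t) ≤ |b| * Real.exp (-t) := by
              nlinarith [le_abs_self b]
          _ ≤ |b| * 1 := by nlinarith [abs_nonneg b]
          _ = |b| := mul_one _
      nlinarith [le_abs_self c]
    rcases ha.lt_or_eq with ha' | ha'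
    · left
      refine ⟨ha', ?_⟩
      have h1 := key (1 - c / a)
      have hca : a * (c / a) = c := by rw [mul_comm, div_mul_cancel₀ _ ha'.ne]
      have h2 : a * (1 - c / a) = a - c := by rw [mul_sub, mul_one, hca]
      have h3 : -a ≤ b * Real.exp (1 - c / a) := by nlinarith
      have hmul : Real.exp (1 - c / a) * Real.exp (c / a) = Real.exp 1 := by
        rw [← Real.exp_add]; ring_nf
      calc -a * Real.exp (c / a)
          ≤ b * Real.exp (1 - c / a) * Real.exp (c / a) :=
            mul_le_mul_of_nonneg_right h3 (Real.exp_pos _).le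
        _ = Real.exp 1 * b := by rw [mul_assoc, hmul]; ring
    · right
      subst ha'
      refine ⟨rfl, hb, ?_⟩
      by_contra hc
      push_neg at hc
      set x := -c / (2 * (b + 1)) with hx
      have hxpos : 0 < x := div_pos (by linarith) (by linarith)
      have h1 := key (Real.log x)
      rw [Real.exp_log hxpos] at h1
      have h1' : 0 ≤ b * x + c := by linarith [h1]
      have h2 : x * (2 * (b + 1)) = -c := by rw [hx]; field_simp
      nlinarith [h1', h2, hb, hc, mul_nonneg h1' (by linarith : (0:ℝ) ≤ 2 * (b + 1))]
  · rintro (⟨ha, hK⟩ | ⟨ha, hb, hc⟩) ⟨r, p, q⟩ (⟨hq, hp⟩ | ⟨hq, hr, hp⟩)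
    · -- a < 0 case, q > 0
      have hbpos : 0 < b := by
        nlinarith [mul_pos (neg_pos.2 ha) (Real.exp_pos (c / a)), Real.exp_pos 1]
      have hk := key_ineq a b c ha hK (r / q)
      have hrq : a * (r / q) * q = a * r := by field_simp
      nlinarith [mul_nonneg hk hq.le, mul_le_mul_of_nonneg_left hp hbpos.le,
        Real.exp_pos (r / q)]
    · -- a < 0 case, q = 0
      have hbpos : 0 < b := by
        nlinarith [mul_pos (neg_pos.2 ha) (Real.exp_pos (c / a)), Real.exp_pos 1]
      subst hq
      replace hr : r ≤ 0 := hr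
      replace hp : 0 ≤ p := hp
      show 0 ≤ a * r + b * p + c * 0
      nlinarith [mul_nonneg (le_of_lt (neg_pos.2 ha)) (neg_nonneg.2 hr),
        mul_nonneg hbpos.le hp]
    · -- a = 0 case, q > 0
      subst ha
      have hppos : 0 < p := lt_of_lt_of_le (mul_pos hq (Real.exp_pos _)) hp
      nlinarith
    · -- a = 0 case, q = 0
      subst ha; subst hq
      replace hr : r ≤ 0 := hr
      replace hp : 0 ≤ p := hp
      show 0 ≤ 0 * r + b * p + c * 0
      nlinarith
end

section
/- Let q ∈ ℝ^{X×Y×Z} be feasible for the convex program CP (marginal constraints q_{x,y,*} = b^y_{x,y}, q_{x,*,z} = b^z_{x,z}, q ≥ 0). Define f(q) componentwise by f(q)_{x,y,z} = (q_{x,y,z}·ln(q_{*,y,z}/q_{x,y,z}), q_{*,y,z}, q_{x,y,z}) if q_{x,y,z} > 0 and (0, q_{*,y,z}, q_{x,y,z}) if q_{x,y,z} = 0. Then f(q) is feasible for the exponential cone program EXP and the EXP objective -Σ r_{x,y,z} evaluated at f(q) equals the CP objective Σ q_{x,y,z}·ln(q_{x,y,z}/q_{*,y,z}) at q. -/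
open scoped BigOperators

/-- Any CP-feasible `q` lifts, via `f`, to an EXP-feasible point with the same
objective value. -/
theorem cp_feasible_lifts_to_exp {X Y Z : Type*} [Fintype X] [Fintype Y] [Fintype Z]
    (bY : X × Y → ℝ) (bZ : X × Z → ℝ)
    (q : X × Y × Z → ℝ)
    (hq0 : ∀ t, 0 ≤ q t)
    (hmY : ∀ x y, ∑ z, q (x, y, z) = bY (x, y))
    (hmZ : ∀ x z, ∑ y, q (x, y, z) = bZ (x, z)) :
    let m : Y × Z → ℝ := fun yz => ∑ x, q (x, yz.1, yz.2)
    let r : X × Y × Z → ℝ :=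
      fun t => if q t = 0 then 0 else q t * Real.log (m t.2 / q t)
    let p : X × Y × Z → ℝ := fun t => m t.2
    (∀ x y, ∑ z, q (x, y, z) = bY (x, y)) ∧
    (∀ x z, ∑ y, q (x, y, z) = bZ (x, z)) ∧
    (∀ t : X × Y × Z, p t = ∑ x, q (x, t.2.1, t.2.2)) ∧
    (∀ t : X × Y × Z, (r t, p t, q t) ∈ Kexp) ∧
    (-∑ t : X × Y × Z, r t =
      ∑ t : X × Y × Z, if q t = 0 then 0 else q t * Real.log (q t / m t.2)) := by
  intro m r p
  refine ⟨hmY, hmZ, fun t => rfl, fun t => ?_, ?_⟩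
  · by_cases h : q t = 0
    · right
      refine ⟨h, by simp [r, h], ?_⟩
      exact Finset.sum_nonneg fun x _ => hq0 _
    · left
      have hqpos : 0 < q t := lt_of_le_of_ne (hq0 t) (Ne.symm h)
      have hm : q t ≤ m t.2 := by
        have : q (t.1, t.2) ≤ ∑ x, q (x, t.2.1, t.2.2) :=
          Finset.single_le_sum (f := fun x => q (x, t.2.1, t.2.2))
            (fun x _ => hq0 _) (Finset.mem_univ t.1)
        simpa [m] using this
      refine ⟨hqpos, ?_⟩
      have hmpos : 0 < m t.2 := lt_of_lt_of_le hqpos hm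
      have : r t / q t = Real.log (m t.2 / q t) := by
        simp [r, h]
      rw [this, Real.exp_log (by positivity)]
      have : q t * (m t.2 / q t) = m t.2 := by field_simp
      simp [p, this]
  · rw [← Finset.sum_neg_distrib]
    refine Finset.sum_congr rfl fun t _ => ?_
    by_cases h : q t = 0
    · simp [r, h]
    · have hqpos : 0 < q t := lt_of_le_of_ne (hq0 t) (Ne.symm h)
      have hmpos : 0 < m t.2 := by
        have : q (t.1, t.2) ≤ ∑ x, q (x, t.2.1, t.2.2) :=
          Finset.single_le_sum (f := fun x => q (x, t.2.1, t.2.2))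
            (fun x _ => hq0 _) (Finset.mem_univ t.1)
        exact lt_of_lt_of_le hqpos (by simpa [m] using this)
      simp only [r, h, if_false]
      rw [Real.log_div (ne_of_gt hmpos) h, Real.log_div h (ne_of_gt hmpos)]
      ring
end

section
/- If (r,p,q) is feasible for the exponential cone program EXP, then -Σ_{x,y,z} r_{x,y,z} ≥ Σ_{x,y,z} q_{x,y,z}·ln(q_{x,y,z}/p_{x,y,z}), with the summand interpreted as 0 when q_{x,y,z} = 0. Consequently the optimal values of EXP and the convex program CP coincide. -/
open scoped BigOperators

/-!
For `q > 0` the cone condition `q * exp (r / q) ≤ p` says exactly `r ≤ -q * log (q / p)`, so every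
EXP-feasible point is dominated termwise by the CP objective of its `q`-component. Conversely, a
CP-feasible `q` satisfies `q ≤ p := q_{*,y,z}`, and `r := -q * log (q / p)` then lies on the boundary
of the cone, so the CP value is itself an EXP value. Each feasible value of one program is thus
bounded below by one of the other, and the infima coincide; this holds even for junk values of
`sInf` (empty or unbounded feasible sets), since then both sets are degenerate together.
-/

open Real

lemma ite_eq_zero_mul_log_div (q p : ℝ) :
    (if q = 0 then 0 else q * log (q / p)) = q * log (q / p) := by
  split_ifs with hq <;> simp [hq]

lemma nonneg_of_mem_Kexp {r p q : ℝ} (h : (r, p, q) ∈ Kexp) : 0 ≤ q := by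
  rcases h with ⟨hq, -⟩ | ⟨hq, -⟩
  exacts [hq.le, hq.ge]

lemma mul_log_div_le_neg_of_mem_Kexp {r p q : ℝ} (h : (r, p, q) ∈ Kexp) :
    q * log (q / p) ≤ -r := by
  rcases h with ⟨hq, hle⟩ | ⟨rfl, hr, -⟩
  · dsimp only at hq hle
    have hexp : exp (r / q) ≤ p / q := by rwa [le_div_iff₀ hq, mul_comm]
    have hpq : 0 < p / q := (exp_pos _).trans_le hexp
    have hlog : r / q ≤ log (p / q) := (le_log_iff_exp_le hpq).2 hexp
    have hinv : log (q / p) = -log (p / q) := by rw [← inv_div, log_inv]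
    rwa [hinv, mul_neg, neg_le_neg_iff, ← div_le_iff₀' hq]
  · simpa using hr

lemma mem_Kexp_of_le {p q : ℝ} (hq : 0 ≤ q) (hqp : q ≤ p) : (-(q * log (q / p)), p, q) ∈ Kexp := by
  rcases hq.eq_or_lt with rfl | hq
  · exact Or.inr ⟨rfl, by simp, hqp⟩
  · refine Or.inl ⟨hq, le_of_eq ?_⟩
    have hp : 0 < p := hq.trans_le hqp
    dsimp only
    rw [neg_div, mul_div_cancel_left₀ _ hq.ne', exp_neg, exp_log (div_pos hq hp), inv_div,
      mul_div_cancel₀ _ hq.ne']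

lemma sum_mul_log_div_le_neg_sum_of_mem_Kexp {ι : Type*} [Fintype ι] {r p q : ι → ℝ}
    (h : ∀ i, (r i, p i, q i) ∈ Kexp) : ∑ i, q i * log (q i / p i) ≤ -∑ i, r i := by
  rw [← Finset.sum_neg_distrib]
  exact Finset.sum_le_sum fun i _ => mul_log_div_le_neg_of_mem_Kexp (h i)

/-- For EXP-feasible `(r,p,q)` the objective bounds the CP objective, and the
optimal values of EXP and CP coincide. -/
theorem exp_objective_dominates_and_values_coincide
    {X Y Z : Type*} [Fintype X] [Fintype Y] [Fintype Z]
    (bY : X × Y → ℝ) (bZ : X × Z → ℝ) :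
    (∀ r p q : X × Y × Z → ℝ,
      (∀ x y, ∑ z, q (x, y, z) = bY (x, y)) →
      (∀ x z, ∑ y, q (x, y, z) = bZ (x, z)) →
      (∀ t : X × Y × Z, p t = ∑ x, q (x, t.2.1, t.2.2)) →
      (∀ t : X × Y × Z, (r t, p t, q t) ∈ Kexp) →
      (∑ t : X × Y × Z, if q t = 0 then 0 else q t * Real.log (q t / p t))
        ≤ -∑ t : X × Y × Z, r t) ∧
    sInf {v : ℝ | ∃ r p q : X × Y × Z → ℝ,
        (∀ x y, ∑ z, q (x, y, z) = bY (x, y)) ∧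
        (∀ x z, ∑ y, q (x, y, z) = bZ (x, z)) ∧
        (∀ t : X × Y × Z, p t = ∑ x, q (x, t.2.1, t.2.2)) ∧
        (∀ t : X × Y × Z, (r t, p t, q t) ∈ Kexp) ∧
        v = -∑ t : X × Y × Z, r t}
      = sInf {v : ℝ | ∃ q : X × Y × Z → ℝ,
        (∀ t, 0 ≤ q t) ∧
        (∀ x y, ∑ z, q (x, y, z) = bY (x, y)) ∧
        (∀ x z, ∑ y, q (x, y, z) = bZ (x, z)) ∧
        v = ∑ t : X × Y × Z, if q t = 0 then 0
            else q t * Real.log (q t / ∑ x : X, q (x, t.2.1, t.2.2))} := by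
  simp only [ite_eq_zero_mul_log_div]
  refine ⟨fun r p q _ _ _ hK => sum_mul_log_div_le_neg_sum_of_mem_Kexp hK, ?_⟩
  apply csInf_eq_csInf_of_forall_exists_le
  · rintro v ⟨r, p, q, hY, hZ, hp, hK, rfl⟩
    obtain rfl : p = fun t => ∑ x, q (x, t.2.1, t.2.2) := funext hp
    exact ⟨_, ⟨q, fun t => nonneg_of_mem_Kexp (hK t), hY, hZ, rfl⟩,
      sum_mul_log_div_le_neg_sum_of_mem_Kexp hK⟩
  · rintro v ⟨q, hq, hY, hZ, rfl⟩
    have hle_marginal (t : X × Y × Z) : q t ≤ ∑ x, q (x, t.2.1, t.2.2) :=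
      Finset.single_le_sum (f := fun x => q (x, t.2.1, t.2.2)) (fun x _ => hq _)
        (Finset.mem_univ t.1)
    refine ⟨_, ⟨fun t => -(q t * log (q t / ∑ x, q (x, t.2.1, t.2.2))), _, q, hY, hZ,
      fun t => rfl, fun t => mem_Kexp_of_le (hq t) (hle_marginal t), rfl⟩, ?_⟩
    simp only [Finset.sum_neg_distrib, neg_neg, le_refl]
end

section
/- If the random variables Y and Z are independent and X = (Y,Z) (the COPY gate), then the BROJA decomposition satisfies CI(X;Y,Z) = 0, SI(X;Y,Z) = I(Y;Z) = 0, UI(X;Y\Z) = H(Y|Z) = H(Y), and UI(X;Z\Y) = H(Z|Y) = H(Z); in particular the optimum of the convex program CP is attained at the original distribution. -/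
open scoped BigOperators

/-- Shannon entropy of a finitely-supported density. -/
noncomputable def ent {α : Type*} [Fintype α] (f : α → ℝ) : ℝ := ∑ a, Real.negMulLog (f a)

section
variable {Y Z : Type*} [Fintype Y] [Fintype Z]

/-- Marginal of `X` (the first coordinate, valued in `Y × Z`). -/
def margX (q : (Y × Z) × Y × Z → ℝ) : Y × Z → ℝ := fun x => ∑ y, ∑ z, q (x, y, z)

/-- Marginal of the pair `(Y, Z)`. -/
def margYZ (q : (Y × Z) × Y × Z → ℝ) : Y × Z → ℝ := fun yz => ∑ x, q (x, yz.1, yz.2)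

/-- Marginal of the pair `(X, Y)`. -/
def margXY (q : (Y × Z) × Y × Z → ℝ) : (Y × Z) × Y → ℝ := fun a => ∑ z, q (a.1, a.2, z)

/-- Marginal of the pair `(X, Z)`. -/
def margXZ (q : (Y × Z) × Y × Z → ℝ) : (Y × Z) × Z → ℝ := fun a => ∑ y, q (a.1, y, a.2)

/-- Marginal of `Y`. -/
def margY (q : (Y × Z) × Y × Z → ℝ) : Y → ℝ := fun y => ∑ x, ∑ z, q (x, y, z)

/-- Marginal of `Z`. -/
def margZ (q : (Y × Z) × Y × Z → ℝ) : Z → ℝ := fun z => ∑ x, ∑ y, q (x, y, z)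

/-- Mutual information `I_q(X; (Y,Z))`. -/
noncomputable def MI (q : (Y × Z) × Y × Z → ℝ) : ℝ := ent (margX q) + ent (margYZ q) - ent q

/-- Mutual information `I_q(X; Y)`. -/
noncomputable def MIXY (q : (Y × Z) × Y × Z → ℝ) : ℝ := ent (margX q) + ent (margY q) - ent (margXY q)

/-- Conditional mutual information `I_q(X; Y | Z)`. -/
noncomputable def CMIYgZ (q : (Y × Z) × Y × Z → ℝ) : ℝ :=
  ent (margXZ q) + ent (margYZ q) - ent (margZ q) - ent q

/-- Conditional mutual information `I_q(X; Z | Y)`. -/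
noncomputable def CMIZgY (q : (Y × Z) × Y × Z → ℝ) : ℝ :=
  ent (margXY q) + ent (margYZ q) - ent (margY q) - ent q

/-- The BROJA feasible set: nonnegative distributions with the same
`(X,Y)`- and `(X,Z)`-marginals as `p`. -/
def Delta (p : (Y × Z) × Y × Z → ℝ) : Set ((Y × Z) × Y × Z → ℝ) :=
  {q | (∀ w, 0 ≤ q w) ∧ (∀ a, margXY q a = margXY p a) ∧ (∀ a, margXZ q a = margXZ p a)}

end

/-- Entropy of a product density. -/
lemma sum_negMulLog_mul {Y Z : Type*} [Fintype Y] [Fintype Z]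
    (pY : Y → ℝ) (pZ : Z → ℝ) (hY1 : ∑ y, pY y = 1) (hZ1 : ∑ z, pZ z = 1) :
    ∑ x : Y × Z, Real.negMulLog (pY x.1 * pZ x.2) = ent pY + ent pZ := by
  rw [Fintype.sum_prod_type]
  simp only [Real.negMulLog_mul, Finset.sum_add_distrib, ← Finset.mul_sum, hZ1, mul_one]
  unfold ent
  congr 1
  · refine Finset.sum_congr rfl fun y _ => ?_
    rw [← Finset.sum_mul, hZ1, one_mul]
  · rw [← Finset.sum_mul, hY1, one_mul]

/-- BROJA PID of the COPY gate with independent inputs: `CI = 0`,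
`SI = I(Y;Z) = 0`, `UI(X;Y\Z) = H(Y|Z) = H(Y)`, `UI(X;Z\Y) = H(Z|Y) = H(Z)`,
and the CP optimum is attained at the original distribution. -/
theorem copy_gate_pid {Y Z : Type*} [Fintype Y] [Fintype Z]
    [DecidableEq Y] [DecidableEq Z]
    (pY : Y → ℝ) (pZ : Z → ℝ)
    (hY0 : ∀ y, 0 ≤ pY y) (hY1 : ∑ y, pY y = 1)
    (hZ0 : ∀ z, 0 ≤ pZ z) (hZ1 : ∑ z, pZ z = 1) :
    let p : (Y × Z) × Y × Z → ℝ :=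
      fun w => if w.2.1 = w.1.1 ∧ w.2.2 = w.1.2 then pY w.1.1 * pZ w.1.2 else 0
    let UIY : ℝ := sInf (CMIYgZ '' Delta p)
    let UIZ : ℝ := sInf (CMIZgY '' Delta p)
    let minMI : ℝ := sInf (MI '' Delta p)
    let CI : ℝ := MI p - minMI
    let SI : ℝ := MIXY p - UIY
    CI = 0 ∧
    SI = ent (margY p) + ent (margZ p) - ent (margYZ p) ∧
    ent (margY p) + ent (margZ p) - ent (margYZ p) = 0 ∧
    UIY = ent (margYZ p) - ent (margZ p) ∧
    ent (margYZ p) - ent (margZ p) = ent pY ∧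
    UIZ = ent (margYZ p) - ent (margY p) ∧
    ent (margYZ p) - ent (margY p) = ent pZ ∧
    p ∈ Delta p ∧ minMI = MI p := by
  intro p UIY UIZ minMI CI SI
  have hp_def : ∀ w : (Y × Z) × Y × Z,
      p w = if w.2.1 = w.1.1 ∧ w.2.2 = w.1.2 then pY w.1.1 * pZ w.1.2 else 0 := fun _ => rfl
  -- marginals of p
  have hXY : ∀ a : (Y × Z) × Y, margXY p a = if a.2 = a.1.1 then pY a.1.1 * pZ a.1.2 else 0 := by
    intro a
    simp only [margXY, hp_def, ite_and]
    by_cases h : a.2 = a.1.1 <;> simp [h]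
  have hXZ : ∀ a : (Y × Z) × Z, margXZ p a = if a.2 = a.1.2 then pY a.1.1 * pZ a.1.2 else 0 := by
    intro a
    simp only [margXZ, hp_def, ite_and]
    by_cases h : a.2 = a.1.2 <;> simp [h]
  have hX : ∀ x : Y × Z, margX p x = pY x.1 * pZ x.2 := by
    intro x
    simp [margX, hp_def, ite_and]
  have hYZ : ∀ x : Y × Z, margYZ p x = pY x.1 * pZ x.2 := by
    intro x
    simp [margYZ, hp_def, ite_and, Fintype.sum_prod_type]
  have hYm : margY p = pY := by
    funext y
    simp only [margY, hp_def, ite_and, Fintype.sum_prod_type]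
    simp
    rw [← Finset.mul_sum, hZ1, mul_one]
  have hZm : margZ p = pZ := by
    funext z
    simp only [margZ, hp_def, ite_and, Fintype.sum_prod_type]
    simp
    rw [← Finset.sum_mul, hY1, one_mul]
  -- p is feasible
  have hpD : p ∈ Delta p := by
    refine ⟨fun w => ?_, fun _ => rfl, fun _ => rfl⟩
    rw [hp_def]
    split
    · exact mul_nonneg (hY0 _) (hZ0 _)
    · exact le_rfl
  -- Delta p is a singleton
  have hDelta : Delta p = {p} := by
    ext q
    constructor
    · rintro ⟨h0, hqXY, hqXZ⟩
      have hq0y : ∀ (x : Y × Z) (y' : Y), y' ≠ x.1 → ∀ z', q (x, y', z') = 0 := by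
        intro x y' hy z'
        have h := hqXY (x, y')
        rw [hXY] at h
        simp only [hy, if_neg hy] at h
        have h2 := (Finset.sum_eq_zero_iff_of_nonneg
          (fun z _ => h0 (x, y', z))).mp h
        exact h2 z' (Finset.mem_univ _)
      have hq0z : ∀ (x : Y × Z) (z' : Z), z' ≠ x.2 → ∀ y', q (x, y', z') = 0 := by
        intro x z' hz y'
        have h := hqXZ (x, z')
        rw [hXZ] at h
        simp only [if_neg hz] at h
        have h2 := (Finset.sum_eq_zero_iff_of_nonneg
          (fun y _ => h0 (x, y, z'))).mp h
        exact h2 y' (Finset.mem_univ _)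
      have hqd : ∀ x : Y × Z, q (x, x.1, x.2) = pY x.1 * pZ x.2 := by
        intro x
        have h := hqXY (x, x.1)
        rw [hXY] at h
        simp at h
        rw [← h]
        symm
        apply Finset.sum_eq_single
        · intro z _ hz
          exact hq0z x z hz x.1
        · intro h'; exact absurd (Finset.mem_univ _) h'
      funext w
      obtain ⟨x, y', z'⟩ := w
      rw [hp_def]
      by_cases hy : y' = x.1
      · by_cases hz : z' = x.2
        · subst hy; subst hz
          simp only [and_self, if_pos]
          exact (hqd x).trans (by simp)
        · rw [if_neg (by tauto)]
          exact hq0z x z' hz y'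
      · rw [if_neg (by tauto)]
        exact hq0y x y' hy z'
    · rintro rfl
      exact hpD
  -- entropies
  have eY : ent (margY p) = ent pY := by rw [hYm]
  have eZ : ent (margZ p) = ent pZ := by rw [hZm]
  have eYZ : ent (margYZ p) = ent pY + ent pZ := by
    rw [show margYZ p = fun x => pY x.1 * pZ x.2 from funext hYZ]
    exact sum_negMulLog_mul pY pZ hY1 hZ1
  have eX : ent (margX p) = ent pY + ent pZ := by
    rw [show margX p = fun x => pY x.1 * pZ x.2 from funext hX]
    exact sum_negMulLog_mul pY pZ hY1 hZ1
  have eP : ent p = ent pY + ent pZ := by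
    rw [← sum_negMulLog_mul pY pZ hY1 hZ1]
    unfold ent
    rw [Fintype.sum_prod_type]
    congr 1
    funext x
    rw [Fintype.sum_prod_type]
    simp [hp_def, ite_and, apply_ite Real.negMulLog]
  have eXY : ent (margXY p) = ent pY + ent pZ := by
    rw [← sum_negMulLog_mul pY pZ hY1 hZ1]
    unfold ent
    rw [Fintype.sum_prod_type]
    congr 1
    funext x
    simp [hXY, apply_ite Real.negMulLog]
  have eXZ : ent (margXZ p) = ent pY + ent pZ := by
    rw [← sum_negMulLog_mul pY pZ hY1 hZ1]
    unfold ent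
    rw [Fintype.sum_prod_type]
    congr 1
    funext x
    simp [hXZ, apply_ite Real.negMulLog]
  -- infima over the singleton
  have hUIY : UIY = CMIYgZ p := by
    show sInf (CMIYgZ '' Delta p) = _
    rw [hDelta, Set.image_singleton, csInf_singleton]
  have hUIZ : UIZ = CMIZgY p := by
    show sInf (CMIZgY '' Delta p) = _
    rw [hDelta, Set.image_singleton, csInf_singleton]
  have hmin : minMI = MI p := by
    show sInf (MI '' Delta p) = _
    rw [hDelta, Set.image_singleton, csInf_singleton]
  refine ⟨?_, ?_, ?_, ?_, ?_, ?_, ?_, hpD, hmin⟩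
  · show MI p - minMI = 0
    rw [hmin]; ring
  · show MIXY p - UIY = _
    rw [hUIY]
    unfold MIXY CMIYgZ
    rw [eX, eY, eXY, eXZ, eYZ, eZ, eP]; ring
  · rw [eY, eZ, eYZ]; ring
  · rw [hUIY]
    unfold CMIYgZ
    rw [eXZ, eYZ, eZ, eP]; ring
  · rw [eYZ, eZ]; ring
  · rw [hUIZ]
    unfold CMIZgY
    rw [eXY, eYZ, eY, eP]; ring
  · rw [eYZ, eY]; ring
end

section
/- For (u,v,w) in the dual exponential cone K*_exp with u < 0 and any (r,p,q) in the exponential cone K_exp, one has u·r + v·p + w·q ≥ 0. -/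
/-- The defining inequality of the dual cone, for dual points with `u < 0`. -/
theorem dual_pairing_nonneg (u v w r p q : ℝ)
    (hdual : (u, v, w) ∈ KexpStar) (hu : u < 0)
    (hprim : (r, p, q) ∈ Kexp) :
    0 ≤ u * r + v * p + w * q := by
  rcases hdual with h | h
  · obtain ⟨-, hv⟩ := h
    simp only [KexpStar] at hv
    have hvpos : 0 < v := by
      have h1 : 0 < -u * Real.exp (w / u) := mul_pos (neg_pos.mpr hu) (Real.exp_pos _)
      nlinarith [Real.exp_pos (1:ℝ)]
    rcases hprim with hp | hp
    · obtain ⟨hq, hpq⟩ := hp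
      simp only at hq hpq
      have hv' : -u * Real.exp (w / u - 1) ≤ v := by
        have h2 : Real.exp (w / u) = Real.exp (w / u - 1) * Real.exp 1 := by
          rw [← Real.exp_add]; ring_nf
        nlinarith [Real.exp_pos (1:ℝ)]
      have hE : 0 < q * Real.exp (r / q) := by positivity
      have s1 : v * (q * Real.exp (r / q)) ≤ v * p :=
        mul_le_mul_of_nonneg_left hpq hvpos.le
      have s2 : (-u * Real.exp (w / u - 1)) * (q * Real.exp (r / q))
          ≤ v * (q * Real.exp (r / q)) :=
        mul_le_mul_of_nonneg_right hv' hE.le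
      have s3 : (-u * Real.exp (w / u - 1)) * (q * Real.exp (r / q))
          = -u * q * Real.exp (r / q + w / u - 1) := by
        rw [show r / q + w / u - 1 = (w / u - 1) + (r / q) by ring, Real.exp_add]; ring
      have key : r / q + w / u ≤ Real.exp (r / q + w / u - 1) := by
        have := Real.add_one_le_exp (r / q + w / u - 1); linarith
      have s4 : -u * q * (r / q + w / u) ≤ -u * q * Real.exp (r / q + w / u - 1) :=
        mul_le_mul_of_nonneg_left key (mul_pos (neg_pos.mpr hu) hq).le
      have hw : u * (w / u) = w := by field_simp [hu.ne]
      have hr' : q * (r / q) = r := by field_simp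
      have s5 : -u * q * (r / q + w / u) = -(u * r) - w * q := by
        linear_combination (-u) * hr' - q * hw
      linarith
    · obtain ⟨hq0, hr, hp0⟩ := hp
      simp only at hq0 hr hp0
      rw [hq0]
      nlinarith
  · exact absurd h.1 (ne_of_lt hu)
end
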